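/- arXiv:2401.03981 — 4 statements merged into one kernel-verified Lean document; each statement's English description precedes it below -/
import Mathlib

section
/- Let Ω ⊆ ℝ^d be a convex open set, u : Ω → ℝ^d a Lipschitz vector field, x ∈ Ω, and Δt > 0 with Δt · L < 1, where L is the Lipschitz constant of u. If for some boundary hyperplane Γ with unit normal n there is a closest point x_Γ ∈ Γ to x with u(x_Γ) · n = 0, then |(x − (x − Δt·u(x))) · n| ≤ dist(x, Γ); i.e., the Euler-step departure point x − Δt·u(x) does not cross Γ. -/
open scoped RealInnerProductSpace

/-! The normal component of `u` vanishes at `x_Γ`, so at `x` it is at most the variation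
`‖u x - u x_Γ‖ ≤ L ‖x - x_Γ‖`. An Euler step of length `Δt` therefore moves `x` in the normal
direction by at most `Δt L ‖x - x_Γ‖ < ‖x - x_Γ‖`, which is the distance from `x` to `Γ`. -/

theorem Metric.dist_le_infDist_of_forall_dist_le {α : Type*} [PseudoMetricSpace α]
    {s : Set α} {x p : α} (hp : p ∈ s) (hclosest : ∀ y ∈ s, dist x p ≤ dist x y) :
    dist x p ≤ Metric.infDist x s :=
  (Metric.le_infDist ⟨p, hp⟩).2 fun y hy => hclosest y hy

theorem LipschitzWith.abs_inner_le_of_inner_eq_zero {E F : Type*}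
    [PseudoMetricSpace E] [NormedAddCommGroup F] [InnerProductSpace ℝ F]
    {L : NNReal} {u : E → F} (hu : LipschitzWith L u) {x p : E} {n : F}
    (htang : ⟪u p, n⟫ = 0) :
    |⟪u x, n⟫| ≤ L * dist x p * ‖n‖ :=
  calc |⟪u x, n⟫| = |⟪u x - u p, n⟫| := by rw [inner_sub_left, htang, sub_zero]
    _ ≤ ‖u x - u p‖ * ‖n‖ := abs_real_inner_le_norm _ _
    _ ≤ L * dist x p * ‖n‖ := by
        gcongr
        rw [← dist_eq_norm]
        exact hu.dist_le_mul x p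

theorem euler_step_does_not_cross_boundary_general {d : ℕ}
    (u : EuclideanSpace ℝ (Fin d) → EuclideanSpace ℝ (Fin d))
    (L : NNReal) (hu : LipschitzWith L u)
    (x : EuclideanSpace ℝ (Fin d))
    (Δt : ℝ) (hΔt : 0 < Δt) (hsmall : Δt * L < 1)
    (n xΓ : EuclideanSpace ℝ (Fin d)) (hn : ‖n‖ = 1)
    (Γ : Set (EuclideanSpace ℝ (Fin d)))
    (hΓ : Γ = {y | ⟪y - xΓ, n⟫ = 0})
    (hclosest : ∀ y ∈ Γ, ‖x - xΓ‖ ≤ ‖x - y‖)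
    (htang : ⟪u xΓ, n⟫ = 0) :
    |⟪x - (x - Δt • u x), n⟫| ≤ Metric.infDist x Γ := by
  have hxΓ : xΓ ∈ Γ := by simp [hΓ]
  have hdist : dist x xΓ ≤ Metric.infDist x Γ :=
    Metric.dist_le_infDist_of_forall_dist_le hxΓ fun y hy => by
      simpa only [dist_eq_norm] using hclosest y hy
  have hnormal : |⟪u x, n⟫| ≤ L * dist x xΓ := by
    simpa only [hn, mul_one] using hu.abs_inner_le_of_inner_eq_zero (x := x) htang
  calc |⟪x - (x - Δt • u x), n⟫| = Δt * |⟪u x, n⟫| := by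
        rw [sub_sub_cancel, real_inner_smul_left, abs_mul, abs_of_pos hΔt]
    _ ≤ Δt * L * dist x xΓ := by
        rw [mul_assoc]
        exact mul_le_mul_of_nonneg_left hnormal hΔt.le
    _ ≤ dist x xΓ := mul_le_of_le_one_left dist_nonneg hsmall.le
    _ ≤ Metric.infDist x Γ := hdist

/-- The Euler-step departure point does not cross a boundary hyperplane `Γ`
(with unit normal `n`) on which the velocity is tangential: if `x_Γ` is the
closest point of `Γ` to `x`, `u` is `L`-Lipschitz, `⟪u x_Γ, n⟫ = 0` and
`Δt * L < 1`, then `|⟪x - (x - Δt • u x), n⟫| ≤ dist x Γ`. -/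
theorem euler_step_does_not_cross_boundary {d : ℕ}
    (Ω : Set (EuclideanSpace ℝ (Fin d))) (hΩconv : Convex ℝ Ω) (hΩopen : IsOpen Ω)
    (u : EuclideanSpace ℝ (Fin d) → EuclideanSpace ℝ (Fin d))
    (L : NNReal) (hu : LipschitzWith L u)
    (x : EuclideanSpace ℝ (Fin d)) (hx : x ∈ Ω)
    (Δt : ℝ) (hΔt : 0 < Δt) (hsmall : Δt * L < 1)
    (n xΓ : EuclideanSpace ℝ (Fin d)) (hn : ‖n‖ = 1)
    (Γ : Set (EuclideanSpace ℝ (Fin d)))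
    (hΓ : Γ = {y | ⟪y - xΓ, n⟫ = 0})
    (hclosest : ∀ y ∈ Γ, ‖x - xΓ‖ ≤ ‖x - y‖)
    (htang : ⟪u xΓ, n⟫ = 0) :
    |⟪x - (x - Δt • u x), n⟫| ≤ Metric.infDist x Γ :=
  euler_step_does_not_cross_boundary_general u L hu x Δt hΔt hsmall n xΓ hn Γ hΓ hclosest htang
end

section
/- Let u : Ω → ℝ^d be Lipschitz with u · n = 0 on the boundary of the unit square Ω = (0,1)², and suppose Δt · ‖u‖_{W^{1,∞}} < 1. Then for every x ∈ Ω, the approximate departure point y_Δt(x) = x − Δt·u(x) lies in the closure of Ω. -/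
/-!
Each coordinate is handled separately: the first component of `u` along a horizontal segment
is an `L`-Lipschitz function on `[0, 1]` vanishing at both endpoints, so at `a` its absolute
value is at most `L * min a (1 - a)`, and a step of `Δt` times it, with `Δt * L < 1`, cannot
leave `[0, 1]`.
-/

open Set

lemma sub_mul_mem_Icc_of_abs_le {lo hi a v t L : ℝ} (ht : 0 ≤ t) (htL : t * L ≤ 1)
    (ha : a ∈ Icc lo hi) (hlo : |v| ≤ L * (a - lo)) (hhi : |v| ≤ L * (hi - a)) :
    a - t * v ∈ Icc lo hi := by
  have hstep : ∀ d, 0 ≤ d → |v| ≤ L * d → |t * v| ≤ d := fun d hd hv =>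
    calc |t * v| = t * |v| := by rw [abs_mul, abs_of_nonneg ht]
      _ ≤ t * (L * d) := mul_le_mul_of_nonneg_left hv ht
      _ = (t * L) * d := by ring
      _ ≤ d := mul_le_of_le_one_left hd htL
  have h₁ := abs_le.mp (hstep _ (sub_nonneg.mpr ha.1) hlo)
  have h₂ := abs_le.mp (hstep _ (sub_nonneg.mpr ha.2) hhi)
  constructor <;> linarith [h₁.2, h₂.1]

section Slices

variable {α β γ : Type*} [PseudoEMetricSpace α] [PseudoEMetricSpace β] [PseudoEMetricSpace γ]
  {K : NNReal} {s : Set α} {t : Set β}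

lemma LipschitzOnWith.fst {f : α → β × γ} (hf : LipschitzOnWith K f s) :
    LipschitzOnWith K (fun a => (f a).1) s :=
  (LipschitzWith.prod_fst.comp_lipschitzOnWith hf).weaken (one_mul K).le

lemma LipschitzOnWith.snd {f : α → β × γ} (hf : LipschitzOnWith K f s) :
    LipschitzOnWith K (fun a => (f a).2) s :=
  (LipschitzWith.prod_snd.comp_lipschitzOnWith hf).weaken (one_mul K).le

lemma LipschitzOnWith.comp_prodMk_right {f : α × β → γ} (hf : LipschitzOnWith K f (s ×ˢ t))
    {b : β} (hb : b ∈ t) : LipschitzOnWith K (fun a => f (a, b)) s :=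
  (hf.comp (LipschitzWith.prodMk_right b).lipschitzOnWith fun _ ha => ⟨ha, hb⟩).weaken
    (mul_one K).le

lemma LipschitzOnWith.comp_prodMk_left {f : α × β → γ} (hf : LipschitzOnWith K f (s ×ˢ t))
    {a : α} (ha : a ∈ s) : LipschitzOnWith K (fun b => f (a, b)) t :=
  (hf.comp (LipschitzWith.prodMk_left a).lipschitzOnWith fun _ hb => ⟨ha, hb⟩).weaken
    (mul_one K).le

end Slices

lemma LipschitzOnWith.sub_mul_mem_Icc {g : ℝ → ℝ} {L : NNReal} {lo hi a t : ℝ}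
    (hg : LipschitzOnWith L g (Icc lo hi)) (hlo : g lo = 0) (hhi : g hi = 0)
    (ha : a ∈ Icc lo hi) (ht : 0 ≤ t) (htL : t * L ≤ 1) :
    a - t * g a ∈ Icc lo hi := by
  have hle : lo ≤ hi := ha.1.trans ha.2
  have hg_lo : |g a| ≤ L * (a - lo) := by
    simpa [hlo, Real.dist_eq, abs_of_nonneg (sub_nonneg.mpr ha.1)] using
      hg.dist_le_mul a ha lo (left_mem_Icc.mpr hle)
  have hg_hi : |g a| ≤ L * (hi - a) := by
    simpa [hhi, Real.dist_eq, abs_sub_comm a hi, abs_of_nonneg (sub_nonneg.mpr ha.2)] using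
      hg.dist_le_mul a ha hi (right_mem_Icc.mpr hle)
  exact sub_mul_mem_Icc_of_abs_le ht htL ha hg_lo hg_hi

/-- On the unit square, a Lipschitz velocity field tangential to the boundary
produces Euler-step departure points that remain in the closure of the square. -/
theorem departure_point_in_closure_unit_square
    (Ω : Set (ℝ × ℝ)) (hΩ : Ω = Set.Ioo (0:ℝ) 1 ×ˢ Set.Ioo (0:ℝ) 1)
    (u : ℝ × ℝ → ℝ × ℝ) (L : NNReal) (hu : LipschitzOnWith L u (closure Ω))
    (htang : ∀ p ∈ closure Ω,
      ((p.1 = 0 ∨ p.1 = 1) → (u p).1 = 0) ∧ ((p.2 = 0 ∨ p.2 = 1) → (u p).2 = 0))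
    (Δt : ℝ) (hΔt : 0 < Δt) (hsmall : Δt * L < 1) :
    ∀ x ∈ Ω, x - Δt • u x ∈ closure Ω := by
  subst hΩ
  have hcl : closure (Ioo (0:ℝ) 1 ×ˢ Ioo (0:ℝ) 1) = Icc 0 1 ×ˢ Icc 0 1 := by
    rw [closure_prod_eq, closure_Ioo zero_ne_one]
  rintro x ⟨hx₁, hx₂⟩
  replace hx₁ := Ioo_subset_Icc_self hx₁
  replace hx₂ := Ioo_subset_Icc_self hx₂
  rw [hcl] at hu htang ⊢
  have h0 : (0:ℝ) ∈ Icc 0 1 := left_mem_Icc.mpr zero_le_one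
  have h1 : (1:ℝ) ∈ Icc 0 1 := right_mem_Icc.mpr zero_le_one
  have hrow := (hu.comp_prodMk_right hx₂).fst
  have hcol := (hu.comp_prodMk_left hx₁).snd
  exact ⟨hrow.sub_mul_mem_Icc ((htang (0, x.2) ⟨h0, hx₂⟩).1 (.inl rfl))
      ((htang (1, x.2) ⟨h1, hx₂⟩).1 (.inr rfl)) hx₁ hΔt.le hsmall.le,
    hcol.sub_mul_mem_Icc ((htang (x.1, 0) ⟨hx₁, h0⟩).2 (.inl rfl))
      ((htang (x.1, 1) ⟨hx₁, h1⟩).2 (.inr rfl)) hx₂ hΔt.le hsmall.le⟩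
end

section
/- Let y : ℝ → ℝ^d solve y'(s) = u(y(s), s) with y(t) = x, where u is C². Then y(t − Δt) − (x − Δt·u(x,t)) = (Δt²/2)·(Du/Dt)(x,t) + O(Δt³) as Δt → 0, where Du/Dt = ∂u/∂t + (u·∇)u is the material derivative. -/
/-!
Set `f τ = y (t - τ)`. Along the characteristic `f' τ = -u (y (t - τ), t - τ)` and, by the chain
rule, `f'' τ = (Du/Dt) (y (t - τ), t - τ)`, which is `C¹` in `τ` and hence Lipschitz near `τ = 0`
with some constant `K`. Integrating the bound `‖f'' τ - f'' 0‖ ≤ K τ` twice gives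
`‖f Δt - f 0 - Δt f' 0 - (Δt² / 2) f'' 0‖ ≤ K Δt³ / 6`, which is the claim.
-/

open Set

section Taylor

variable {E : Type*} [NormedAddCommGroup E] [NormedSpace ℝ E]

theorem norm_sub_sub_smul_le_of_norm_deriv_sub_le {g g' : ℝ → E} {K h : ℝ} {n : ℕ}
    (hg : ∀ s ∈ Icc 0 h, HasDerivAt g (g' s) s) (hK : ∀ s ∈ Icc 0 h, ‖g' s - g' 0‖ ≤ K * s ^ n) :
    ∀ s ∈ Icc 0 h, ‖g s - g 0 - s • g' 0‖ ≤ K * s ^ (n + 1) / (n + 1) := by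
  have hB : ∀ s : ℝ, HasDerivAt (fun s => K * s ^ (n + 1) / (n + 1)) (K * s ^ n) s := fun s => by
    refine (((hasDerivAt_pow (n + 1) s).const_mul K).div_const ((n : ℝ) + 1)).congr_deriv ?_
    rw [Nat.add_sub_cancel]; push_cast; field_simp
  have hrem : ∀ s ∈ Icc 0 h,
      HasDerivAt (fun s => g s - g 0 - s • g' 0) (g' s - g' 0) s := fun s hs => by
    simpa using ((hg s hs).sub_const (g 0)).fun_sub ((hasDerivAt_id s).smul_const (g' 0))
  exact image_norm_le_of_norm_deriv_right_le_deriv_boundary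
    (fun s hs => (hrem s hs).continuousAt.continuousWithinAt)
    (fun s hs => (hrem s (Ico_subset_Icc_self hs)).hasDerivWithinAt) (by simp) hB
    (fun s hs => hK s (Ico_subset_Icc_self hs))

theorem norm_sub_taylor_two_le {f f' f'' : ℝ → E} {K h : ℝ} (hh : 0 ≤ h)
    (hf : ∀ s ∈ Icc 0 h, HasDerivAt f (f' s) s) (hf' : ∀ s ∈ Icc 0 h, HasDerivAt f' (f'' s) s)
    (hK : ∀ s ∈ Icc 0 h, ‖f'' s - f'' 0‖ ≤ K * s) :
    ‖f h - f 0 - h • f' 0 - (h ^ 2 / 2) • f'' 0‖ ≤ K * h ^ 3 / 6 := by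
  have hf'_taylor : ∀ s ∈ Icc 0 h, ‖f' s - f' 0 - s • f'' 0‖ ≤ K / 2 * s ^ 2 := fun s hs => by
    have := norm_sub_sub_smul_le_of_norm_deriv_sub_le (n := 1) hf' (by simpa using hK) s hs
    norm_num at this ⊢; linarith
  have hg : ∀ s ∈ Icc 0 h,
      HasDerivAt (fun s => f s - (s ^ 2 / 2) • f'' 0) (f' s - s • f'' 0) s := fun s hs => by
    convert (hf s hs).fun_sub (((hasDerivAt_pow 2 s).div_const 2).smul_const (f'' 0)) using 2
    norm_num
  calc ‖f h - f 0 - h • f' 0 - (h ^ 2 / 2) • f'' 0‖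
      = ‖f h - (h ^ 2 / 2) • f'' 0 - (f 0 - ((0 : ℝ) ^ 2 / 2) • f'' 0) -
          h • (f' 0 - (0 : ℝ) • f'' 0)‖ := by congr 1; simp only [zero_smul]; module
    _ ≤ K / 2 * h ^ (2 + 1) / (2 + 1) := norm_sub_sub_smul_le_of_norm_deriv_sub_le hg
          (fun s hs => by simpa [sub_right_comm] using hf'_taylor s hs) h ⟨hh, le_rfl⟩
    _ = K * h ^ 3 / 6 := by ring

end Taylor

section Characteristic

variable {E : Type*} [NormedAddCommGroup E] [NormedSpace ℝ E]

noncomputable def materialDeriv (u : E × ℝ → E) (p : E × ℝ) : E :=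
  fderiv ℝ u p (u p, 1)

def IsCharacteristic (u : E × ℝ → E) (y : ℝ → E) : Prop :=
  ∀ s, HasDerivAt y (u (y s, s)) s

theorem ContDiff.materialDeriv {u : E × ℝ → E} {n : ℕ} (hu : ContDiff ℝ (n + 1) u) :
    ContDiff ℝ n (materialDeriv u) :=
  (hu.fderiv_right le_rfl).clm_apply ((hu.of_le (by norm_cast; omega)).prodMk contDiff_const)

variable {u : E × ℝ → E} {y : ℝ → E}

theorem IsCharacteristic.contDiff_one (hy : IsCharacteristic u y) (hu : Continuous u) :
    ContDiff ℝ 1 y := by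
  have hyd : Differentiable ℝ y := fun s => (hy s).differentiableAt
  rw [contDiff_one_iff_deriv, funext fun s => (hy s).deriv]
  exact ⟨hyd, hu.comp (hyd.continuous.prodMk continuous_id)⟩

theorem IsCharacteristic.hasDerivAt_velocity (hy : IsCharacteristic u y) {s : ℝ}
    (hu : DifferentiableAt ℝ u (y s, s)) :
    HasDerivAt (fun s => u (y s, s)) (materialDeriv u (y s, s)) s :=
  hu.hasFDerivAt.comp_hasDerivAt (f := fun s => (y s, s)) s ((hy s).prodMk (hasDerivAt_id' s))

theorem IsCharacteristic.norm_sub_backward_taylor_two_le (hy : IsCharacteristic u y)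
    (hu : Differentiable ℝ u) {t h K : ℝ} (hh : 0 ≤ h)
    (hK : ∀ τ ∈ Icc 0 h, ‖materialDeriv u (y (t - τ), t - τ) - materialDeriv u (y t, t)‖ ≤ K * τ) :
    ‖y (t - h) - y t + h • u (y t, t) - (h ^ 2 / 2) • materialDeriv u (y t, t)‖ ≤ K * h ^ 3 / 6 := by
  have hback : ∀ τ, HasDerivAt (fun τ => y (t - τ)) (-u (y (t - τ), t - τ)) τ :=
    fun τ => (hy (t - τ)).comp_const_sub t τ
  have hback' : ∀ τ, HasDerivAt (fun τ => -u (y (t - τ), t - τ))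
      (materialDeriv u (y (t - τ), t - τ)) τ := fun τ => by
    simpa using ((hy.hasDerivAt_velocity (hu _)).comp_const_sub t τ).fun_neg
  simpa using norm_sub_taylor_two_le (f := fun τ => y (t - τ)) hh (fun τ _ => hback τ)
    (fun τ _ => hback' τ) (by simpa using hK)

end Characteristic

/-- Backward-Euler departure point expansion: if `y` is the characteristic
through `(x, t)` of a `C²` velocity field `u`, then
`y (t-Δt) - (x - Δt • u (x,t)) = (Δt²/2) • (Du/Dt)(x,t) + O(Δt³)`, where the
material derivative `Du/Dt = ∂ₜu + (u·∇)u` is `fderiv u (x,t) (u (x,t), 1)`. -/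
theorem departure_point_expansion {d : ℕ}
    (u : EuclideanSpace ℝ (Fin d) × ℝ → EuclideanSpace ℝ (Fin d))
    (hu : ContDiff ℝ 2 u)
    (y : ℝ → EuclideanSpace ℝ (Fin d)) (x : EuclideanSpace ℝ (Fin d)) (t : ℝ)
    (hy : ∀ s, HasDerivAt y (u (y s, s)) s) (hyt : y t = x) :
    ∃ C > (0:ℝ), ∃ δ > (0:ℝ), ∀ Δt : ℝ, 0 < Δt → Δt < δ →
      ‖y (t - Δt) - (x - Δt • u (x, t)) -
          (Δt ^ 2 / 2) • (fderiv ℝ u (x, t)) (u (x, t), 1)‖ ≤ C * Δt ^ 3 := by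
  have hy : IsCharacteristic u y := hy
  have hM : ContDiff ℝ 1 fun s => materialDeriv u (y s, s) :=
    hu.materialDeriv.comp ((hy.contDiff_one hu.continuous).prodMk contDiff_id)
  obtain ⟨K, U, hU, hK⟩ := hM.contDiffAt.exists_lipschitzOnWith (x := t)
  obtain ⟨δ, hδ, hball⟩ := Metric.mem_nhds_iff.mp hU
  refine ⟨K + 1, by positivity, δ, hδ, fun Δt hpos hlt => ?_⟩
  have hlip : ∀ τ ∈ Icc 0 Δt,
      ‖materialDeriv u (y (t - τ), t - τ) - materialDeriv u (y t, t)‖ ≤ K * τ := fun τ hτ => by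
    have hτU : t - τ ∈ U := hball <| by
      rw [Metric.mem_ball, Real.dist_eq, sub_sub_cancel_left, abs_neg, abs_of_nonneg hτ.1]
      exact hτ.2.trans_lt hlt
    simpa [← dist_eq_norm, abs_of_nonneg hτ.1] using
      hK.dist_le_mul _ hτU _ (hball (Metric.mem_ball_self hδ))
  have key := hy.norm_sub_backward_taylor_two_le (hu.differentiable two_ne_zero) hpos.le hlip
  rw [hyt] at key
  rw [← sub_add]
  calc _ ≤ K * Δt ^ 3 / 6 := key
    _ ≤ (K + 1) * Δt ^ 3 := by nlinarith [K.coe_nonneg, pow_pos hpos 3]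
end

section
/- Suppose ζ(x,t) satisfies the Oldroyd-B relation ∂_t ζ + (u·∇)ζ − (∇u)ζ − ζ(∇u)ᵀ = −(1/Wi)(ζ − I) with u and ζ sufficiently smooth. Then F·ζ(y_Δt, t−Δt)·Fᵀ = ζ(x,t) − Δt·(upper convected derivative of ζ at (x,t)) + O(Δt²), where F = I + Δt·∇u(x,t) and y_Δt = x − Δt·u(x,t). -/
/-!
Consider the defect `D(s) = (1 + s G) ζ(x - s u, t - s) (1 + s G)ᵀ - ζ(x, t) + s · ucd(x, t)`.
It is `C²` and `D(0) = 0`. By the chain rule along the backward characteristic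
`s ↦ (x - s u, t - s)` and the product rule,
`D'(0) = G ζ - ∂ₜζ - (u · ∇)ζ + ζ Gᵀ + ucd = 0`. A `C²` function whose value and derivative
vanish at `0` is `O(s²)` there: its derivative is `O(s)`, and the mean value inequality
integrates this bound.
-/

open Matrix

attribute [local instance] Matrix.normedAddCommGroup Matrix.normedSpace

section MatrixCalculus

variable {𝕜 : Type*} [NontriviallyNormedField 𝕜] [CompleteSpace 𝕜]
  {l m n : Type*} [Fintype l] [Fintype m] [Fintype n]

theorem Matrix.isBoundedBilinearMap_mul :
    IsBoundedBilinearMap 𝕜 (fun p : Matrix l m 𝕜 × Matrix m n 𝕜 => p.1 * p.2) :=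
  (LinearMap.mk₂ 𝕜 (fun (A : Matrix l m 𝕜) (B : Matrix m n 𝕜) => A * B) Matrix.add_mul
    Matrix.smul_mul Matrix.mul_add fun c A B => Matrix.mul_smul A c B).toContinuousBilinearMap
    |>.isBoundedBilinearMap

theorem HasDerivAt.matrix_mul {f : 𝕜 → Matrix l m 𝕜} {g : 𝕜 → Matrix m n 𝕜}
    {f' : Matrix l m 𝕜} {g' : Matrix m n 𝕜} {s : 𝕜}
    (hf : HasDerivAt f f' s) (hg : HasDerivAt g g' s) :
    HasDerivAt (fun r => f r * g r) (f' * g s + f s * g') s := by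
  rw [add_comm]
  exact (Matrix.isBoundedBilinearMap_mul.hasFDerivAt (f s, g s)).comp_hasDerivAt s (hf.prodMk hg)

@[fun_prop]
theorem ContDiff.matrix_mul {E : Type*} [NormedAddCommGroup E] [NormedSpace 𝕜 E]
    {k : WithTop ℕ∞} {f : E → Matrix l m 𝕜} {g : E → Matrix m n 𝕜}
    (hf : ContDiff 𝕜 k f) (hg : ContDiff 𝕜 k g) : ContDiff 𝕜 k (fun r => f r * g r) :=
  (Matrix.isBoundedBilinearMap_mul.contDiff.comp (hf.prodMk hg) :)

end MatrixCalculus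

section Conjugation

variable {𝕜 : Type*} [NontriviallyNormedField 𝕜] [CompleteSpace 𝕜] {n : Type*} [Fintype n]
  [DecidableEq n]

theorem ContDiff.one_add_smul_mul_mul_transpose {k : WithTop ℕ∞} {M : 𝕜 → Matrix n n 𝕜}
    (A : Matrix n n 𝕜) (hM : ContDiff 𝕜 k M) :
    ContDiff 𝕜 k (fun s => (1 + s • A) * M s * (1 + s • A)ᵀ) := by
  simp only [transpose_add, transpose_smul, transpose_one]
  fun_prop

theorem HasDerivAt.one_add_smul_mul_mul_transpose {M : 𝕜 → Matrix n n 𝕜} {M' : Matrix n n 𝕜}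
    (A : Matrix n n 𝕜) (hM : HasDerivAt M M' 0) :
    HasDerivAt (fun s => (1 + s • A) * M s * (1 + s • A)ᵀ) (A * M 0 + M' + M 0 * Aᵀ) 0 := by
  have hline : ∀ B : Matrix n n 𝕜, HasDerivAt (fun s : 𝕜 => 1 + s • B) B 0 := fun B =>
    (((hasDerivAt_id (0 : 𝕜)).smul_const B).const_add 1).congr_deriv (one_smul 𝕜 B)
  simp only [transpose_add, transpose_smul, transpose_one]
  convert ((hline A).matrix_mul hM).matrix_mul (hline Aᵀ) using 1
  simp

end Conjugation

theorem hasDerivAt_along_backward_characteristic {E F : Type*} [NormedAddCommGroup E]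
    [NormedSpace ℝ E] [NormedAddCommGroup F] [NormedSpace ℝ F] {ζ : E × ℝ → F} {x : E} {t : ℝ}
    (hζ : DifferentiableAt ℝ ζ (x, t)) (v : E) :
    HasDerivAt (fun s : ℝ => ζ (x - s • v, t - s))
      (-deriv (fun r => ζ (x, r)) t - fderiv ℝ (fun z => ζ (z, t)) x v) 0 := by
  set L := fderiv ℝ ζ (x, t)
  have hL : HasFDerivAt ζ L (x, t) := hζ.hasFDerivAt
  have h_time : deriv (fun r => ζ (x, r)) t = L (0, 1) :=
    (hL.comp_hasDerivAt t ((hasDerivAt_const t x).prodMk (hasDerivAt_id t))).deriv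
  have h_space : fderiv ℝ (fun z => ζ (z, t)) x v = L (v, 0) := by
    have h : HasFDerivAt (fun z => ζ (z, t)) (L.comp (.inl ℝ E ℝ)) x :=
      hL.comp x (hasFDerivAt_prodMk_left x t)
    rw [h.fderiv]
    rfl
  have h_path : HasDerivAt (fun s : ℝ => (x - s • v, t - s)) (-v, -1) 0 := by
    simpa using (((hasDerivAt_id (0 : ℝ)).smul_const v).const_sub x).prodMk
      ((hasDerivAt_id (0 : ℝ)).const_sub t)
  refine (hL.comp_hasDerivAt_of_eq 0 h_path (by simp)).congr_deriv ?_
  rw [h_time, h_space, ← map_neg, ← map_sub]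
  congr 1
  ext <;> simp

theorem exists_norm_le_mul_sq_of_deriv_eq_zero {E : Type*} [NormedAddCommGroup E]
    [NormedSpace ℝ E] {f : ℝ → E} (hf : ContDiff ℝ 2 f) (h0 : f 0 = 0) (h1 : deriv f 0 = 0) :
    ∃ C > (0 : ℝ), ∃ δ > (0 : ℝ), ∀ s : ℝ, 0 < s → s < δ → ‖f s‖ ≤ C * s ^ 2 := by
  have hderiv : deriv f =O[nhds 0] fun s => s := by
    simpa [h1] using (hf.differentiable_deriv_two 0).isBigO_sub
  obtain ⟨C, hC, hbound⟩ := hderiv.exists_pos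
  obtain ⟨δ, hδ, hball⟩ := Metric.eventually_nhds_iff.mp hbound.bound
  refine ⟨C, hC, δ, hδ, fun s hs hsδ => ?_⟩
  have hderiv_le : ∀ r ∈ Set.Ico 0 s, ‖deriv f r‖ ≤ C * s := fun r hr => by
    have hr_dist : dist r 0 < δ := by
      rw [Real.dist_0_eq_abs, abs_of_nonneg hr.1]
      exact hr.2.trans hsδ
    calc ‖deriv f r‖ ≤ C * ‖r‖ := hball hr_dist
      _ ≤ C * s := by
        rw [Real.norm_of_nonneg hr.1]
        exact mul_le_mul_of_nonneg_left hr.2.le hC.le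
  have hmvt := norm_image_sub_le_of_norm_deriv_le_segment'
    (fun r _ => (hf.differentiable two_ne_zero r).hasDerivAt.hasDerivWithinAt) hderiv_le s
    (Set.right_mem_Icc.2 hs.le)
  rw [h0, sub_zero, sub_zero] at hmvt
  linarith

theorem discrete_upper_convected_consistency_general {d : ℕ}
    (u : EuclideanSpace ℝ (Fin d) × ℝ → EuclideanSpace ℝ (Fin d))
    (ζ : EuclideanSpace ℝ (Fin d) × ℝ → Matrix (Fin d) (Fin d) ℝ)
    (hζ : ContDiff ℝ 2 ζ)
    -- the velocity gradient matrix
    (G : EuclideanSpace ℝ (Fin d) → ℝ → Matrix (Fin d) (Fin d) ℝ)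
    -- the upper convected derivative of ζ
    (ucd : EuclideanSpace ℝ (Fin d) → ℝ → Matrix (Fin d) (Fin d) ℝ)
    (hucd : ∀ z s, ucd z s =
      deriv (fun r => ζ (z, r)) s + fderiv ℝ (fun z' => ζ (z', s)) z (u (z, s))
        - G z s * ζ (z, s) - ζ (z, s) * (G z s)ᵀ)
    (x : EuclideanSpace ℝ (Fin d)) (t : ℝ) :
    ∃ C > (0:ℝ), ∃ δ > (0:ℝ), ∀ Δt : ℝ, 0 < Δt → Δt < δ →
      ‖(1 + Δt • G x t) * ζ (x - Δt • u (x, t), t - Δt) * (1 + Δt • G x t)ᵀ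
          - ζ (x, t) + Δt • ucd x t‖ ≤ C * Δt ^ 2 := by
  set defect := fun s : ℝ => (1 + s • G x t) * ζ (x - s • u (x, t), t - s) * (1 + s • G x t)ᵀ
    - ζ (x, t) + s • ucd x t
  have h_smooth : ContDiff ℝ 2 defect :=
    ((ContDiff.one_add_smul_mul_mul_transpose (G x t) (hζ.comp (by fun_prop))).sub
      contDiff_const).add (contDiff_id.smul contDiff_const)
  -- restated so that its `deriv` and `fderiv` carry the same instances as those in `hucd`
  have h_path : HasDerivAt (fun s : ℝ => ζ (x - s • u (x, t), t - s))
      (-deriv (fun r => ζ (x, r)) t - fderiv ℝ (fun z => ζ (z, t)) x (u (x, t))) 0 :=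
    hasDerivAt_along_backward_characteristic (hζ.differentiable two_ne_zero (x, t)) (u (x, t))
  have h_deriv : HasDerivAt defect 0 0 := by
    refine (((h_path.one_add_smul_mul_mul_transpose (G x t)).sub_const (ζ (x, t))).add
      ((hasDerivAt_id (0 : ℝ)).smul_const (ucd x t))).congr_deriv ?_
    simp only [hucd, zero_smul, sub_zero, one_smul]
    abel
  exact exists_norm_le_mul_sq_of_deriv_eq_zero h_smooth (by simp) h_deriv.deriv

/-- First-order consistency of the discrete upper convected derivative: for a
smooth solution `ζ` of the Oldroyd-B relation,
`F ζ(y_Δt, t-Δt) Fᵀ = ζ(x,t) - Δt (upper convected derivative of ζ at (x,t)) + O(Δt²)`,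
where `F = I + Δt ∇u(x,t)` and `y_Δt = x - Δt u(x,t)`. -/
theorem discrete_upper_convected_consistency {d : ℕ}
    (u : EuclideanSpace ℝ (Fin d) × ℝ → EuclideanSpace ℝ (Fin d))
    (hu : ContDiff ℝ 2 u)
    (ζ : EuclideanSpace ℝ (Fin d) × ℝ → Matrix (Fin d) (Fin d) ℝ)
    (hζ : ContDiff ℝ 2 ζ)
    (Wi : ℝ) (hWi : 0 < Wi)
    -- the velocity gradient matrix
    (G : EuclideanSpace ℝ (Fin d) → ℝ → Matrix (Fin d) (Fin d) ℝ)
    (hG : ∀ z s, G z s =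
      Matrix.of fun i j => fderiv ℝ (fun z' => u (z', s)) z (EuclideanSpace.single j 1) i)
    -- the upper convected derivative of ζ
    (ucd : EuclideanSpace ℝ (Fin d) → ℝ → Matrix (Fin d) (Fin d) ℝ)
    (hucd : ∀ z s, ucd z s =
      deriv (fun r => ζ (z, r)) s + fderiv ℝ (fun z' => ζ (z', s)) z (u (z, s))
        - G z s * ζ (z, s) - ζ (z, s) * (G z s)ᵀ)
    -- ζ satisfies the Oldroyd-B constitutive relation
    (hOB : ∀ z s, ucd z s = -(1 / Wi) • (ζ (z, s) - 1))
    (x : EuclideanSpace ℝ (Fin d)) (t : ℝ) :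
    ∃ C > (0:ℝ), ∃ δ > (0:ℝ), ∀ Δt : ℝ, 0 < Δt → Δt < δ →
      ‖(1 + Δt • G x t) * ζ (x - Δt • u (x, t), t - Δt) * (1 + Δt • G x t)ᵀ
          - ζ (x, t) + Δt • ucd x t‖ ≤ C * Δt ^ 2 :=
  discrete_upper_convected_consistency_general u ζ hζ G ucd hucd x t
end
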